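/- Let Γ be the discrete Heisenberg group and ρ = l^{-T} : Γ → GL(3,Z) the representation with ρ(α) the inverse transpose of [[1,0,0],[0,1,1],[0,0,1]] and ρ(β) = ρ(γ) = I. Using the free Z[Γ]-resolution with boundary maps ∂₂(e²₁) = (1−γβ)e¹₁ + (α−γ)e¹₂ − e¹₃, ∂₂(e²₂) = (1−γ)e¹₂ − (1−β)e¹₃, ∂₂(e²₃) = (1−γ)e¹₁ + (α−1)e¹₃, ∂₃(e³) = (γ−1)e²₁ + (α−γ)e²₂ + (1−γβ)e²₃, the second twisted cohomology group H²(Γ; Z³_ρ) is isomorphic to Z⁵ = Z ⊕ Z ⊕ Z ⊕ Z ⊕ Z. -/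
import Mathlib


open Matrix

namespace HeisenbergH2

/-- `ρ(α)`: the inverse transpose of `l(α) = [[1,0,0],[0,1,1],[0,0,1]]`. -/
noncomputable def ρα : Matrix (Fin 3) (Fin 3) ℤ := ((!![1,0,0;0,1,1;0,0,1])⁻¹)ᵀ

/-- `ρ(β) = I`. -/
def ρβ : Matrix (Fin 3) (Fin 3) ℤ := 1

/-- `ρ(γ) = I`. -/
def ργ : Matrix (Fin 3) (Fin 3) ℤ := 1

/-- Twisted coboundary `δ₃ : Hom_{ℤ[Γ]}(C₂, ℤ³) → Hom_{ℤ[Γ]}(C₃, ℤ³)` dual to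
`∂₃(e³) = (γ−1)e²₁ + (α−γ)e²₂ + (1−γβ)e²₃`, where a cochain `φ` is identified with its
values `(φ(e²₁), φ(e²₂), φ(e²₃)) ∈ (ℤ³)³`. -/
noncomputable def δ₃ : (Fin 3 → (Fin 3 → ℤ)) →ₗ[ℤ] (Fin 3 → ℤ) :=
  ((ργ - 1).mulVecLin).comp (LinearMap.proj 0) +
  ((ρα - ργ).mulVecLin).comp (LinearMap.proj 1) +
  ((1 - ργ * ρβ).mulVecLin).comp (LinearMap.proj 2)

/-- Twisted coboundary `δ₂ : Hom_{ℤ[Γ]}(C₁, ℤ³) → Hom_{ℤ[Γ]}(C₂, ℤ³)` dual to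
`∂₂(e²₁) = (1−γβ)e¹₁ + (α−γ)e¹₂ − e¹₃`, `∂₂(e²₂) = (1−γ)e¹₂ − (1−β)e¹₃`,
`∂₂(e²₃) = (1−γ)e¹₁ + (α−1)e¹₃`. -/
noncomputable def δ₂ : (Fin 3 → (Fin 3 → ℤ)) →ₗ[ℤ] (Fin 3 → (Fin 3 → ℤ)) :=
  LinearMap.pi
    ![((1 - ργ * ρβ).mulVecLin).comp (LinearMap.proj 0) +
        ((ρα - ργ).mulVecLin).comp (LinearMap.proj 1) -
        (LinearMap.proj 2 : (Fin 3 → (Fin 3 → ℤ)) →ₗ[ℤ] (Fin 3 → ℤ)),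
      ((1 - ργ).mulVecLin).comp (LinearMap.proj 1) -
        ((1 - ρβ).mulVecLin).comp (LinearMap.proj 2),
      ((1 - ργ).mulVecLin).comp (LinearMap.proj 0) +
        ((ρα - 1).mulVecLin).comp (LinearMap.proj 2)]


lemma ρα_eq : ρα = !![1,0,0;0,1,0;0,-1,1] := by
  have h : (!![1,0,0;0,1,1;0,0,1] : Matrix (Fin 3) (Fin 3) ℤ)⁻¹ = !![1,0,-0;0,1,-1;0,0,1] := by
    apply Matrix.inv_eq_right_inv
    decide
  rw [ρα, h]
  decide

lemma δ₃_apply (x : Fin 3 → Fin 3 → ℤ) : δ₃ x = ![0, 0, -x 1 1] := by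
  funext i
  simp only [δ₃, ρα_eq, ρβ, ργ, LinearMap.add_apply, LinearMap.comp_apply,
    LinearMap.proj_apply, Matrix.mulVecLin_apply]
  fin_cases i <;>
    simp [Matrix.mulVec, dotProduct, Fin.sum_univ_three, Matrix.one_apply,
      Matrix.sub_apply, Matrix.vecHead, Matrix.vecTail, Function.comp] <;> ring

lemma δ₂_apply (ψ : Fin 3 → Fin 3 → ℤ) :
    δ₂ ψ = ![![-ψ 2 0, -ψ 2 1, -ψ 1 1 - ψ 2 2], ![0,0,0], ![0, 0, -ψ 2 1]] := by
  funext i j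
  simp only [δ₂, ρα_eq, ρβ, ργ, LinearMap.pi_apply, LinearMap.add_apply, LinearMap.sub_apply,
    LinearMap.comp_apply, LinearMap.proj_apply, Matrix.mulVecLin_apply]
  fin_cases i <;> fin_cases j <;>
    simp [Matrix.mulVec, dotProduct, Fin.sum_univ_three, Matrix.one_apply,
      Matrix.sub_apply, Matrix.vecHead, Matrix.vecTail, Function.comp] <;> ring

/-- The quotient map `ker δ₃ → ℤ⁵`. -/
def g : (Fin 3 → Fin 3 → ℤ) →ₗ[ℤ] (Fin 5 → ℤ) where
  toFun x := ![x 1 0, x 1 2, x 2 0, x 2 1, x 2 2 - x 0 1]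
  map_add' x y := by
    funext i; fin_cases i <;> simp <;> ring
  map_smul' c x := by
    funext i; fin_cases i <;> simp [mul_sub]

/-- The twisted cohomology group `H²(Γ; ℤ³_ρ) = ker δ₃ / im δ₂` for the `3`-dimensional
Heisenberg manifold is isomorphic to `ℤ⁵`. -/
theorem heisenberg_H2 :
    Nonempty ((LinearMap.ker δ₃ ⧸
        Submodule.comap (LinearMap.ker δ₃).subtype (LinearMap.range δ₂))
      ≃ₗ[ℤ] (Fin 5 → ℤ)) := by
  classical
  set f : LinearMap.ker δ₃ →ₗ[ℤ] (Fin 5 → ℤ) := g.comp (LinearMap.ker δ₃).subtype with hf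
  have hker : LinearMap.ker f =
      Submodule.comap (LinearMap.ker δ₃).subtype (LinearMap.range δ₂) := by
    ext ⟨x, hx⟩
    have hx11 : x 1 1 = 0 := by
      have := congrFun (LinearMap.mem_ker.mp hx) 2
      rw [δ₃_apply] at this
      simpa using (neg_eq_zero.mp (by simpa using this))
    simp only [LinearMap.mem_ker, Submodule.mem_comap, Submodule.subtype_apply,
      LinearMap.mem_range, hf, LinearMap.comp_apply]
    constructor
    · intro h
      have h0 := congrFun h 0
      have h1 := congrFun h 1
      have h2 := congrFun h 2
      have h3 := congrFun h 3
      have h4 := congrFun h 4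
      simp only [g, LinearMap.coe_mk, AddHom.coe_mk, Submodule.subtype_apply] at h0 h1 h2 h3 h4
      simp only [Matrix.cons_val_zero, Matrix.cons_val_one, Matrix.head_cons,
        Pi.zero_apply] at h0 h1 h2 h3 h4
      refine ⟨![0, ![0, -x 0 2, 0], ![-x 0 0, -x 0 1, 0]], ?_⟩
      rw [δ₂_apply]
      funext i j
      fin_cases i <;> fin_cases j <;>
        simp_all [Matrix.vecHead, Matrix.vecTail, Function.comp] <;> linarith
    · rintro ⟨ψ, rfl⟩
      funext i
      rw [δ₂_apply]
      fin_cases i <;> simp [g, Matrix.vecHead, Matrix.vecTail, Function.comp]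
  have hsurj : Function.Surjective f := by
    intro v
    refine ⟨⟨![![0,0,0], ![v 0, 0, v 1], ![v 2, v 3, v 4]], ?_⟩, ?_⟩
    · rw [LinearMap.mem_ker, δ₃_apply]
      funext i; fin_cases i <;> simp
    · funext i
      fin_cases i <;> simp [hf, g]
  exact ⟨(Submodule.quotEquivOfEq _ _ hker.symm).trans
    (f.quotKerEquivOfSurjective hsurj)⟩


end HeisenbergH2
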